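/- Under the same setting (finite X, i.i.d. samples, integrable G), for every ε ≥ 0, almost surely there exists R_0 such that for all R ≥ R_0, every ε/2-optimal solution of the SAA problem ĝ_R is an ε-optimal solution of the true problem g; in particular for ε = 0 and assuming the true problem has a unique optimizer, eventually the set of optimizers of ĝ_R is contained in the set of optimizers of g. -/

import Mathlib

open MeasureTheory ProbabilityTheory Filter Topology

/-! The strong law of large numbers gives, almost surely, pointwise and hence (as `X` is finite)
uniform convergence of the sample averages `ĝ_R` to `g`. Once `|ĝ_R - g| < η` on `X`, a
`δ`-minimizer of `ĝ_R` is a `(δ + 2η)`-minimizer of `g`. For exact minimizers, finiteness of `X`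
gives a positive gap between `min g` and every non-minimal value of `g`, so `ε`-minimizers of `g`
are exact minimizers once `ε` is below that gap. -/

section ApproxMinimizers

variable {X : Type*} [Finite X]

theorem le_iInf_add_of_abs_sub_lt {f g : X → ℝ} {η δ : ℝ} (hfg : ∀ x, |f x - g x| < η) {x : X}
    (hx : f x ≤ (⨅ y, f y) + δ) : g x ≤ (⨅ y, g y) + δ + 2 * η := by
  have : Nonempty X := ⟨x⟩
  obtain ⟨xm, hxm⟩ := exists_eq_ciInf_of_finite (f := g)
  have hf : ⨅ y, f y ≤ f xm := ciInf_le (Set.finite_range f).bddBelow xm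
  have hx' := abs_lt.1 (hfg x)
  have hxm' := abs_lt.1 (hfg xm)
  linarith

theorem eventually_le_iInf_add_of_tendsto {ι : Type*} {l : Filter ι} {f : ι → X → ℝ} {g : X → ℝ}
    (hf : ∀ x, Tendsto (fun i => f i x) l (𝓝 (g x))) {δ ε : ℝ} (hδε : δ < ε) :
    ∀ᶠ i in l, ∀ x, f i x ≤ (⨅ y, f i y) + δ → g x ≤ (⨅ y, g y) + ε := by
  have hη : 0 < (ε - δ) / 2 := by linarith
  have hunif : ∀ᶠ i in l, ∀ x, |f i x - g x| < (ε - δ) / 2 :=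
    eventually_all.2 fun x => by simpa [Real.dist_eq] using Metric.tendsto_nhds.1 (hf x) _ hη
  filter_upwards [hunif] with i hi x hx
  linarith [le_iInf_add_of_abs_sub_lt hi hx]

theorem exists_pos_forall_le_iInf_add_imp_eq (g : X → ℝ) :
    ∃ ε > 0, ∀ x, g x ≤ (⨅ y, g y) + ε → g x = ⨅ y, g y := by
  suffices h : ∀ᶠ ε in 𝓝[>] (0 : ℝ), ∀ x, g x ≤ (⨅ y, g y) + ε → g x = ⨅ y, g y from
    (h.and self_mem_nhdsWithin).exists.imp fun ε hε => ⟨hε.2, hε.1⟩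
  refine eventually_all.2 fun x => ?_
  rcases (ciInf_le (Set.finite_range g).bddBelow x).eq_or_lt with h | h
  · exact Eventually.of_forall fun _ _ => h.symm
  · filter_upwards [Ioo_mem_nhdsGT (sub_pos.2 h)] with ε hε hx
    linarith [hε.2]

end ApproxMinimizers

theorem stmt4_general (X Ω : Type) [Fintype X] [MeasurableSpace Ω]
    (μ : Measure Ω) (G : X → ℕ → Ω → ℝ)
    (hint : ∀ x r, Integrable (G x r) μ)
    (hident : ∀ x r, IdentDistrib (G x r) (G x 0) μ μ)
    (hindep : ∀ x, Pairwise fun r s => IndepFun (G x r) (G x s) μ) :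
    (∀ ε : ℝ, 0 < ε → ∀ᵐ ω ∂μ, ∃ R0 : ℕ, ∀ R ≥ R0, ∀ x : X,
        (∑ r ∈ Finset.range R, G x r ω) / R ≤
            (⨅ x', (∑ r ∈ Finset.range R, G x' r ω) / R) + ε / 2 →
        (∫ ω', G x 0 ω' ∂μ) ≤ (⨅ x', ∫ ω', G x' 0 ω' ∂μ) + ε)
    ∧ ((∃! xs : X, (∫ ω', G xs 0 ω' ∂μ) = ⨅ x', ∫ ω', G x' 0 ω' ∂μ) →
        ∀ᵐ ω ∂μ, ∃ R0 : ℕ, ∀ R ≥ R0, ∀ x : X,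
          (∑ r ∈ Finset.range R, G x r ω) / R =
              (⨅ x', (∑ r ∈ Finset.range R, G x' r ω) / R) →
          (∫ ω', G x 0 ω' ∂μ) = ⨅ x', ∫ ω', G x' 0 ω' ∂μ) := by
  have hslln : ∀ᵐ ω ∂μ, ∀ x, Tendsto (fun R : ℕ => (∑ r ∈ Finset.range R, G x r ω) / R)
      atTop (𝓝 (∫ ω', G x 0 ω' ∂μ)) :=
    ae_all_iff.2 fun x => strong_law_ae_real (G x) (hint x 0) (hindep x) (hident x)
  refine ⟨fun ε hε => ?_, fun _ => ?_⟩
  · filter_upwards [hslln] with ω hω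
    exact eventually_atTop.1 (eventually_le_iInf_add_of_tendsto hω (half_lt_self hε))
  · obtain ⟨ε, hε, hgap⟩ := exists_pos_forall_le_iInf_add_imp_eq fun x => ∫ ω', G x 0 ω' ∂μ
    filter_upwards [hslln] with ω hω
    obtain ⟨R0, hR0⟩ := eventually_atTop.1 (eventually_le_iInf_add_of_tendsto hω hε)
    exact ⟨R0, fun R hR x hx => hgap x (hR0 R hR x (hx.le.trans (le_add_of_nonneg_right le_rfl)))⟩

theorem stmt4 (X Ω : Type) [Fintype X] [Nonempty X] [MeasurableSpace Ω]
    (μ : Measure Ω) [IsProbabilityMeasure μ] (G : X → ℕ → Ω → ℝ)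
    (hint : ∀ x r, Integrable (G x r) μ)
    (hident : ∀ x r, IdentDistrib (G x r) (G x 0) μ μ)
    (hindep : ∀ x, Pairwise fun r s => IndepFun (G x r) (G x s) μ) :
    (∀ ε : ℝ, 0 < ε → ∀ᵐ ω ∂μ, ∃ R0 : ℕ, ∀ R ≥ R0, ∀ x : X,
        (∑ r ∈ Finset.range R, G x r ω) / R ≤
            (⨅ x', (∑ r ∈ Finset.range R, G x' r ω) / R) + ε / 2 →
        (∫ ω', G x 0 ω' ∂μ) ≤ (⨅ x', ∫ ω', G x' 0 ω' ∂μ) + ε)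
    ∧ ((∃! xs : X, (∫ ω', G xs 0 ω' ∂μ) = ⨅ x', ∫ ω', G x' 0 ω' ∂μ) →
        ∀ᵐ ω ∂μ, ∃ R0 : ℕ, ∀ R ≥ R0, ∀ x : X,
          (∑ r ∈ Finset.range R, G x r ω) / R =
              (⨅ x', (∑ r ∈ Finset.range R, G x' r ω) / R) →
          (∫ ω', G x 0 ω' ∂μ) = ⨅ x', ∫ ω', G x' 0 ω' ∂μ) :=
  stmt4_general X Ω μ G hint hident hindep
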